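/- Let Ω be a nonempty finite set, D a finite nonempty set, L : D × Ω → ℝ a loss function with f_d = −L(d,·), and suppose R_D = max_{d∈D}(max_w f_d(w) − min_w f_d(w)) > 0. Let ℳ be a nonempty set of probability vectors on Ω. Then max(Ω,D,closure(ℳ),L) = ⋂_{ε>0} max^ε(Ω,D,ℳ,L), where max denotes max^0 and the closure is taken in ℝ^Ω with the standard topology. -/

import Mathlib

/-- Expected utility of decision `d` under probability vector `p`,
for loss `L` (`f_d = -L(d,·)`). -/
def expUtil {Ω D : Type*} [Fintype Ω] (p : Ω → ℝ) (L : D → Ω → ℝ) (d : D) : ℝ :=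
  ∑ w, p w * (-L d w)

/-- `R_D = max_{d∈D} (max_w f_d(w) − min_w f_d(w))`. -/
noncomputable def lossRange {Ω D : Type*} [Fintype Ω] [Nonempty Ω] [Fintype D] [Nonempty D]
    (L : D → Ω → ℝ) : ℝ :=
  Finset.univ.sup' Finset.univ_nonempty
    (fun d : D => Finset.univ.sup' Finset.univ_nonempty (fun w : Ω => -L d w) -
      Finset.univ.inf' Finset.univ_nonempty (fun w : Ω => -L d w))

/-- The set of `ε`-maximal decisions `max^ε(Ω,D,ℳ,L)`. -/
noncomputable def maxSet {Ω D : Type*} [Fintype Ω] [Nonempty Ω] [Fintype D] [Nonempty D]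
    (ε : ℝ) (ℳ : Set (Ω → ℝ)) (L : D → Ω → ℝ) : Set D :=
  {d : D | ∀ e : D, ∃ p ∈ ℳ, expUtil p L e - expUtil p L d ≤ ε * lossRange L}

/-!
For fixed `d, e` the regret `p ↦ E_p(e) - E_p(d)` is continuous, so its infimum over `ℳ` equals
its infimum over `closure ℳ`, and the latter is attained because `ℳ` lies in the compact
standard simplex. Since `R_D > 0`, `d` being `ε`-maximal for every `ε > 0` says exactly that each
of these infima is `≤ 0`, i.e. that `d` is maximal with respect to `closure ℳ`.
-/

open Set

theorem exists_mem_lt_of_mem_closure {X : Type*} [TopologicalSpace X] {S : Set X} {g : X → ℝ}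
    (hg : Continuous g) {p : X} (hp : p ∈ closure S) {c : ℝ} (hc : g p < c) :
    ∃ q ∈ S, g q < c := by
  obtain ⟨q, hqc, hqS⟩ := mem_closure_iff.mp hp _ (isOpen_lt hg continuous_const) hc
  exact ⟨q, hqS, hqc⟩

theorem exists_mem_closure_nonpos_of_forall_pos {X : Type*} [TopologicalSpace X] {S : Set X}
    {g : X → ℝ} (hg : Continuous g) (hS : IsCompact (closure S))
    (h : ∀ δ > 0, ∃ q ∈ S, g q ≤ δ) : ∃ p ∈ closure S, g p ≤ 0 := by
  obtain ⟨q, hq, -⟩ := h 1 one_pos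
  obtain ⟨p, hp, hmin⟩ := hS.exists_isMinOn ⟨q, subset_closure hq⟩ hg.continuousOn
  refine ⟨p, hp, le_of_forall_pos_le_add fun δ hδ => ?_⟩
  obtain ⟨q, hq, hqδ⟩ := h δ hδ
  simpa using (hmin (subset_closure hq)).trans hqδ

theorem continuous_expUtil {Ω D : Type*} [Fintype Ω] (L : D → Ω → ℝ) (d : D) :
    Continuous fun p : Ω → ℝ => expUtil p L d := by
  unfold expUtil
  fun_prop

theorem stmt_10_general {Ω : Type*} [Fintype Ω] [Nonempty Ω]
    {D : Type*} [Fintype D] [Nonempty D]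
    (L : D → Ω → ℝ) (hR : 0 < lossRange L)
    (ℳ : Set (Ω → ℝ))
    (hℳ : ∀ p ∈ ℳ, (∀ w, 0 ≤ p w) ∧ ∑ w, p w = 1) :
    maxSet 0 (closure ℳ) L = ⋂ (ε : ℝ) (_ : 0 < ε), maxSet ε ℳ L := by
  have hK : IsCompact (closure ℳ) := (isCompact_stdSimplex ℝ Ω).closure_of_subset hℳ
  have hregret (e d : D) : Continuous fun p => expUtil p L e - expUtil p L d :=
    (continuous_expUtil L e).sub (continuous_expUtil L d)
  ext d
  simp only [maxSet, mem_iInter, mem_ofPred_eq, zero_mul]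
  constructor
  · intro hd ε hε e
    obtain ⟨p, hp, hpd⟩ := hd e
    obtain ⟨q, hq, hqd⟩ :=
      exists_mem_lt_of_mem_closure (hregret e d) hp (hpd.trans_lt (mul_pos hε hR))
    exact ⟨q, hq, hqd.le⟩
  · intro hd e
    refine exists_mem_closure_nonpos_of_forall_pos (hregret e d) hK fun δ hδ => ?_
    simpa [div_mul_cancel₀ δ hR.ne'] using hd (δ / lossRange L) (by positivity) e

/-- Corollary 1: `max(Ω,D,closure(ℳ),L) = ⋂_{ε>0} max^ε(Ω,D,ℳ,L)`,
where `max = max^0`. -/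
theorem stmt_10 {Ω : Type*} [Fintype Ω] [Nonempty Ω]
    {D : Type*} [Fintype D] [Nonempty D]
    (L : D → Ω → ℝ) (hR : 0 < lossRange L)
    (ℳ : Set (Ω → ℝ)) (hℳne : ℳ.Nonempty)
    (hℳ : ∀ p ∈ ℳ, (∀ w, 0 ≤ p w) ∧ ∑ w, p w = 1) :
    maxSet 0 (closure ℳ) L = ⋂ (ε : ℝ) (_ : 0 < ε), maxSet ε ℳ L :=
  stmt_10_general L hR ℳ hℳ
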